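/- arXiv:2111.15223 — 3 statements merged into one kernel-verified Lean document; each statement's English description precedes it below -/
import Mathlib

section
/- Let N ≥ 3 and 2 ≤ i ≤ N−1, and let q, z be nonzero complex numbers with z² ≠ 1 and z² ≠ q² (so that Ř(z) and Ř(qz) are defined). Then, as linear maps (ℂ²)^{⊗(N−2)} → (ℂ²)^{⊗N}, one has Ř_{i,i+1}(qz) ∘ Ř_{i−1,i}(z) ∘ Ξ_N^i = −([q²z]/[q/z]) · Ξ_N^{i−1} and Ř_{i−1,i}(qz) ∘ Ř_{i,i+1}(z) ∘ Ξ_N^{i−1} = −([q²z]/[q/z]) · Ξ_N^i. -/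
noncomputable section

/-- `[w] = w − w⁻¹`. -/
def cb (w : ℂ) : ℂ := w - w⁻¹

/-- The six-vertex `Ř`-matrix on `ℂ² ⊗ ℂ²` (basis order `↑↑, ↑↓, ↓↑, ↓↓`,
with `0 = ↑`, `1 = ↓`): diagonal weights `a, c, c, a` and off-diagonal weight
`b` on the spin-exchanging entries. -/
def Rhat (q z : ℂ) : Matrix (Fin 2 × Fin 2) (Fin 2 × Fin 2) ℂ :=
  Matrix.of fun p p' =>
    if p = p' then (if p.1 = p.2 then cb (q*z) / cb (q/z) else cb q / cb (q/z))
    else if p.1 = p'.2 ∧ p.2 = p'.1 then cb z / cb (q/z) else 0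

/-- The operator on `(ℂ²)^{⊗N}` acting as the `4×4` matrix `M` on the (0-based)
tensor factors `k, k+1` and as the identity elsewhere. -/
def twoSiteOp (N : ℕ) (k : ℕ) (h : k + 1 < N) (M : Matrix (Fin 2 × Fin 2) (Fin 2 × Fin 2) ℂ) :
    Matrix (Fin N → Fin 2) (Fin N → Fin 2) ℂ :=
  Matrix.of fun α β =>
    M (α ⟨k, by omega⟩, α ⟨k+1, h⟩) (β ⟨k, by omega⟩, β ⟨k+1, h⟩) *
      ∏ j ∈ (Finset.univ.erase (⟨k, by omega⟩ : Fin N)).erase ⟨k+1, h⟩,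
        (if α j = β j then (1 : ℂ) else 0)

/-- Components of the singlet `s = |↑↓⟩ − |↓↑⟩`. -/
def sComp (a b : Fin 2) : ℂ :=
  if a = 0 ∧ b = 1 then 1 else if a = 1 ∧ b = 0 then -1 else 0

/-- The index of `(ℂ²)^{⊗N}` corresponding to index `j` of `(ℂ²)^{⊗(N−2)}` after
inserting two new factors at the (0-based) positions `k, k+1`. -/
def insIdx (N k : ℕ) (j : Fin (N-2)) : Fin N :=
  if j.1 < k then ⟨j.1, by have := j.2; omega⟩ else ⟨j.1 + 2, by have := j.2; omega⟩

/-- The map `Ξ` inserting the singlet `s` at the (0-based) positions `k, k+1`,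
as a rectangular matrix `(ℂ²)^{⊗(N−2)} → (ℂ²)^{⊗N}`. -/
def Xi (N k : ℕ) (h : k + 1 < N) : Matrix (Fin N → Fin 2) (Fin (N-2) → Fin 2) ℂ :=
  Matrix.of fun α γ =>
    sComp (α ⟨k, by omega⟩) (α ⟨k+1, h⟩) *
      ∏ j : Fin (N-2), (if α (insIdx N k j) = γ j then (1 : ℂ) else 0)


/-! Both identities are local: an operator that acts on three neighbouring sites and
as the identity elsewhere is determined by a 4-index tensor, and `twoSiteOp` on two of
those sites acts on the tensor alone. On three sites the identities hold for any
six-vertex weights `a, b, c` (spectral parameter `z`) and `a', b', c'` (parameter `qz`)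
with `a c' = c b'`, `b a' = λ` and `a b' - c c' = λ`, where `λ = -[q²z]/[q/z]`. For `Ř`
these relations come from `[1/z] = -[z]` and `[xy][x/y] = [x]² - [y]²`. -/

open Finset Function Matrix

lemma Fintype.sum_mul_prod_erase_erase_ite_eq {ι σ R : Type*} [Fintype ι] [DecidableEq ι]
    [Fintype σ] [DecidableEq σ] [CommSemiring R] {a b : ι} (hab : a ≠ b) (α : ι → σ)
    (F : (ι → σ) → R) :
    ∑ β, F β * ∏ j ∈ (univ.erase a).erase b, (if α j = β j then 1 else 0)
      = ∑ u, ∑ v, F (update (update α a u) b v) := by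
  have hfilter : ∑ β, F β * ∏ j ∈ (univ.erase a).erase b, (if α j = β j then 1 else 0)
      = ∑ β with ∀ j ∈ (univ.erase a).erase b, α j = β j, F β := by
    simp only [Finset.prod_boole, mul_boole]
    simp [sum_filter]
  have hupdate : ∀ β ∈ ({β | ∀ j ∈ (univ.erase a).erase b, α j = β j} : Finset _),
      update (update α a (β a)) b (β b) = β := by
    intro β hβ
    ext j
    by_cases hjb : j = b
    · simp [hjb]
    by_cases hja : j = a
    · simp [hja, hab]
    simp_all
  rw [hfilter, ← Fintype.sum_prod_type']
  exact sum_nbij' (fun β => (β a, β b)) (fun p => update (update α a p.1) b p.2)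
    (by simp) (by simp +contextual) hupdate (by simp [hab]) (fun β hβ => by rw [hupdate β hβ])

lemma twoSiteOp_mul_apply {ι : Type*} (N k : ℕ) (h : k + 1 < N)
    (M : Matrix (Fin 2 × Fin 2) (Fin 2 × Fin 2) ℂ) (A : Matrix (Fin N → Fin 2) ι ℂ)
    (α : Fin N → Fin 2) (γ : ι) :
    (twoSiteOp N k h M * A) α γ = ∑ u, ∑ v, M (α ⟨k, by omega⟩, α ⟨k + 1, h⟩) (u, v) *
      A (update (update α ⟨k, by omega⟩ u) ⟨k + 1, h⟩ v) γ := by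
  have hne : (⟨k, by omega⟩ : Fin N) ≠ ⟨k + 1, h⟩ := by simp
  simp only [mul_apply, twoSiteOp, of_apply, mul_right_comm _ _ (A _ γ)]
  rw [Fintype.sum_mul_prod_erase_erase_ite_eq hne]
  simp [hne]

def threeSiteMap (N k : ℕ) (h : k + 2 < N) (T : Fin 2 → Fin 2 → Fin 2 → Fin 2 → ℂ) :
    Matrix (Fin N → Fin 2) (Fin (N - 2) → Fin 2) ℂ :=
  of fun α γ => T (α ⟨k, by omega⟩) (α ⟨k + 1, by omega⟩) (α ⟨k + 2, h⟩) (γ ⟨k, by omega⟩) *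
    ∏ j ∈ univ.erase ⟨k, by omega⟩, if α (insIdx N k j) = γ j then 1 else 0

lemma insIdx_ne {N k : ℕ} {j : Fin (N - 2)} (hj : j.val ≠ k) {p : Fin N}
    (hp₁ : k ≤ p.val) (hp₂ : p.val ≤ k + 2) : insIdx N k j ≠ p := by
  unfold insIdx
  split_ifs <;> exact Fin.ne_of_val_ne (by simp only; omega)

lemma prod_ite_update_insIdx_eq {N k : ℕ} (hk : k < N - 2) (α : Fin N → Fin 2)
    (γ : Fin (N - 2) → Fin 2) {p : Fin N} (hp₁ : k ≤ p.val) (hp₂ : p.val ≤ k + 2) (u : Fin 2) :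
    ∏ j ∈ univ.erase ⟨k, hk⟩, (if update α p u (insIdx N k j) = γ j then (1 : ℂ) else 0)
      = ∏ j ∈ univ.erase ⟨k, hk⟩, if α (insIdx N k j) = γ j then 1 else 0 := by
  refine prod_congr rfl fun j hj => ?_
  have hjk : j.val ≠ k := fun hjk => (mem_erase.1 hj).1 (Fin.ext hjk)
  rw [update_of_ne (insIdx_ne hjk hp₁ hp₂)]

lemma twoSiteOp_mul_threeSiteMap_left (N k : ℕ) (h : k + 2 < N)
    (M : Matrix (Fin 2 × Fin 2) (Fin 2 × Fin 2) ℂ) (T : Fin 2 → Fin 2 → Fin 2 → Fin 2 → ℂ) :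
    twoSiteOp N k (by omega) M * threeSiteMap N k h T
      = threeSiteMap N k h (fun a b c d => ∑ u, ∑ v, M (a, b) (u, v) * T u v c d) := by
  ext α γ
  rw [twoSiteOp_mul_apply]
  simp only [threeSiteMap, of_apply]
  simp (disch := (simp only [Fin.val_mk]; omega)) only [prod_ite_update_insIdx_eq]
  simp (disch := (simp only [ne_eq, Fin.ext_iff]; omega)) only [update_self, update_of_ne]
  simp only [sum_mul, mul_assoc]

lemma twoSiteOp_mul_threeSiteMap_right (N k : ℕ) (h : k + 2 < N)
    (M : Matrix (Fin 2 × Fin 2) (Fin 2 × Fin 2) ℂ) (T : Fin 2 → Fin 2 → Fin 2 → Fin 2 → ℂ) :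
    twoSiteOp N (k + 1) (by omega) M * threeSiteMap N k h T
      = threeSiteMap N k h (fun a b c d => ∑ u, ∑ v, M (b, c) (u, v) * T a u v d) := by
  ext α γ
  rw [twoSiteOp_mul_apply]
  simp only [threeSiteMap, of_apply]
  simp (disch := (simp only [Fin.val_mk]; omega)) only [prod_ite_update_insIdx_eq]
  simp (disch := (simp only [ne_eq, Fin.ext_iff]; omega)) only [update_self, update_of_ne]
  simp only [sum_mul, mul_assoc]

lemma smul_threeSiteMap (N k : ℕ) (h : k + 2 < N) (c : ℂ) (T : Fin 2 → Fin 2 → Fin 2 → Fin 2 → ℂ) :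
    c • threeSiteMap N k h T = threeSiteMap N k h (fun a b c' d => c * T a b c' d) := by
  ext α γ
  simp only [threeSiteMap, Matrix.smul_apply, of_apply, smul_eq_mul, mul_assoc]

lemma insIdx_succ_of_ne {N k : ℕ} {j : Fin (N - 2)} (hj : j.val ≠ k) :
    insIdx N (k + 1) j = insIdx N k j := by
  unfold insIdx
  split_ifs <;> ext <;> simp only <;> omega

lemma Xi_eq_threeSiteMap (N k : ℕ) (h : k + 2 < N) :
    Xi N k (by omega) = threeSiteMap N k h (fun a b c d => sComp a b * if c = d then 1 else 0) := by
  ext α γ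
  have hk : k < N - 2 := by omega
  have hsite : insIdx N k ⟨k, hk⟩ = ⟨k + 2, h⟩ := by simp [insIdx]
  simp only [Xi, threeSiteMap, of_apply]
  rw [← mul_prod_erase univ _ (mem_univ ⟨k, hk⟩), hsite, mul_assoc]

lemma Xi_succ_eq_threeSiteMap (N k : ℕ) (h : k + 2 < N) :
    Xi N (k + 1) h = threeSiteMap N k h (fun a b c d => (if a = d then 1 else 0) * sComp b c) := by
  ext α γ
  have hk : k < N - 2 := by omega
  have hsite : insIdx N (k + 1) ⟨k, hk⟩ = ⟨k, by omega⟩ := by simp [insIdx]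
  have hrest : ∏ j ∈ univ.erase ⟨k, hk⟩, (if α (insIdx N (k + 1) j) = γ j then (1 : ℂ) else 0)
      = ∏ j ∈ univ.erase ⟨k, hk⟩, if α (insIdx N k j) = γ j then 1 else 0 :=
    prod_congr rfl fun j hj => by
      rw [insIdx_succ_of_ne fun hjk => (mem_erase.1 hj).1 (Fin.ext hjk)]
  simp only [Xi, threeSiteMap, of_apply]
  rw [← mul_prod_erase univ _ (mem_univ ⟨k, hk⟩), hsite, hrest]
  ring

def sixVertex (a b c : ℂ) : Matrix (Fin 2 × Fin 2) (Fin 2 × Fin 2) ℂ :=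
  of fun p p' =>
    if p = p' then (if p.1 = p.2 then a else c)
    else if p.1 = p'.2 ∧ p.2 = p'.1 then b else 0

section SingletShift

variable {a b c a' b' c' l : ℂ}

lemma sixVertex_singlet_shift_left (h₁ : a * c' = c * b') (h₂ : b * a' = l)
    (h₃ : a * b' - c * c' = l) :
    (fun x y w d => ∑ u : Fin 2, ∑ v : Fin 2, sixVertex a' b' c' (y, w) (u, v) *
      ∑ u' : Fin 2, ∑ v' : Fin 2, sixVertex a b c (x, u) (u', v') *
        ((if u' = d then 1 else 0) * sComp v' v))
    = fun x y w d => l * (sComp x y * if w = d then 1 else 0) := by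
  funext x y w d
  simp only [Fin.sum_univ_two, sixVertex, of_apply, sComp]
  fin_cases x <;> fin_cases y <;> fin_cases w <;> fin_cases d <;> grind

lemma sixVertex_singlet_shift_right (h₁ : a * c' = c * b') (h₂ : b * a' = l)
    (h₃ : a * b' - c * c' = l) :
    (fun x y w d => ∑ u : Fin 2, ∑ v : Fin 2, sixVertex a' b' c' (x, y) (u, v) *
      ∑ u' : Fin 2, ∑ v' : Fin 2, sixVertex a b c (v, w) (u', v') *
        (sComp u u' * if v' = d then 1 else 0))
    = fun x y w d => l * ((if x = d then 1 else 0) * sComp y w) := by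
  funext x y w d
  simp only [Fin.sum_univ_two, sixVertex, of_apply, sComp]
  fin_cases x <;> fin_cases y <;> fin_cases w <;> fin_cases d <;> grind

end SingletShift

lemma cb_inv (w : ℂ) : cb w⁻¹ = -cb w := by
  simp only [cb, inv_inv, neg_sub]

lemma cb_ne_zero {w : ℂ} (hw : w ≠ 0) (hw1 : w ^ 2 ≠ 1) : cb w ≠ 0 := by
  rw [cb, sub_ne_zero]
  contrapose! hw1
  field_simp at hw1
  exact hw1

lemma cb_mul_mul_cb_div {x y : ℂ} (hx : x ≠ 0) (hy : y ≠ 0) :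
    cb (x * y) * cb (x / y) = cb x ^ 2 - cb y ^ 2 := by
  simp only [cb]
  field_simp
  ring

lemma Rhat_eq_sixVertex (q z : ℂ) :
    Rhat q z = sixVertex (cb (q*z) / cb (q/z)) (cb z / cb (q/z)) (cb q / cb (q/z)) :=
  rfl

lemma Rhat_weight_relations (q : ℂ) {z : ℂ} (hz1 : z ^ 2 ≠ 1) :
    cb (q*z) / cb (q/z) * (cb q / cb (q/(q*z))) = cb q / cb (q/z) * (cb (q*z) / cb (q/(q*z))) ∧
    cb z / cb (q/z) * (cb (q*(q*z)) / cb (q/(q*z))) = -(cb (q^2*z) / cb (q/z)) ∧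
    cb (q*z) / cb (q/z) * (cb (q*z) / cb (q/(q*z))) - cb q / cb (q/z) * (cb q / cb (q/(q*z)))
      = -(cb (q^2*z) / cb (q/z)) := by
  refine ⟨by ring, ?_⟩
  -- in the degenerate cases every term has `cb 0 = 0` as a factor or as a divisor
  rcases eq_or_ne q 0 with rfl | hq
  · simp [cb]
  rcases eq_or_ne z 0 with rfl | hz
  · simp [cb]
  have hinv : cb z * (cb (q/(q*z)))⁻¹ = -1 := by
    rw [div_mul_cancel_left₀ hq, cb_inv, inv_neg, mul_neg, mul_inv_cancel₀ (cb_ne_zero hz hz1)]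
  have hsq : cb (q*z) ^ 2 - cb q ^ 2 = cb (q^2*z) * cb z := by
    rw [← cb_mul_mul_cb_div (mul_ne_zero hq hz) hq, mul_div_cancel_left₀ _ hq]
    ring_nf
  constructor
  · rw [show q * (q * z) = q ^ 2 * z by ring]
    linear_combination cb (q^2*z) * (cb (q/z))⁻¹ * hinv
  · linear_combination
      (cb (q/z))⁻¹ * (cb (q/(q*z)))⁻¹ * hsq + cb (q^2*z) * (cb (q/z))⁻¹ * hinv

/-- Sites are 0-based here: `twoSiteOp N (i-1)` is `Ř_{i,i+1}` and `Xi N (i-1)` is `Ξ_N^i`. -/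
theorem action_R_on_Xi (N i : ℕ) (hi1 : 2 ≤ i) (hi2 : i ≤ N - 1)
    (q z : ℂ) (hz1 : z^2 ≠ 1) :
    twoSiteOp N (i-1) (by omega) (Rhat q (q*z)) *
        (twoSiteOp N (i-2) (by omega) (Rhat q z) * Xi N (i-1) (by omega))
      = (-(cb (q^2*z) / cb (q/z))) • Xi N (i-2) (by omega)
    ∧ twoSiteOp N (i-2) (by omega) (Rhat q (q*z)) *
        (twoSiteOp N (i-1) (by omega) (Rhat q z) * Xi N (i-2) (by omega))
      = (-(cb (q^2*z) / cb (q/z))) • Xi N (i-1) (by omega) := by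
  obtain ⟨k, rfl⟩ : ∃ k, i = k + 2 := ⟨i - 2, by omega⟩
  have h : k + 2 < N := by omega
  obtain ⟨h₁, h₂, h₃⟩ := Rhat_weight_relations q hz1
  constructor
  · show twoSiteOp N (k + 1) h (Rhat q (q*z)) *
        (twoSiteOp N k (by omega) (Rhat q z) * Xi N (k + 1) h) = _ • Xi N k (by omega)
    rw [Xi_succ_eq_threeSiteMap N k h, twoSiteOp_mul_threeSiteMap_left,
      twoSiteOp_mul_threeSiteMap_right, Xi_eq_threeSiteMap N k h, smul_threeSiteMap,
      Rhat_eq_sixVertex, Rhat_eq_sixVertex, sixVertex_singlet_shift_left h₁ h₂ h₃]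
  · show twoSiteOp N k (by omega) (Rhat q (q*z)) *
        (twoSiteOp N (k + 1) h (Rhat q z) * Xi N k (by omega)) = _ • Xi N (k + 1) h
    rw [Xi_eq_threeSiteMap N k h, twoSiteOp_mul_threeSiteMap_right,
      twoSiteOp_mul_threeSiteMap_left, Xi_succ_eq_threeSiteMap N k h, smul_threeSiteMap,
      Rhat_eq_sixVertex, Rhat_eq_sixVertex, sixVertex_singlet_shift_right h₁ h₂ h₃]

end
end

section
/- Let U = ℂ ∖ (−∞, 0], with all powers z^{1/2}, z^{3/2}, z^{5/2} taken as principal branches on U. (a) If τ₁, τ₂ : U → ℂ are differentiable, τ₁′(z) = 0 and τ₂′(z) − τ₁′(z)τ₁(z) + (5/96)·(z³−1)/z^{5/2} = 0 for all z ∈ U, and τ₁(1) = τ₂(1) = 0, then τ₁(z) = 0 and τ₂(z) = −(5/144)·(z^{3/2}−1)²/z^{3/2} for all z ∈ U. (b) If τ̄₂ : U → ℂ is differentiable with τ̄₂′(z) = (7/96)·(z³−1)/z^{5/2} for all z ∈ U and τ̄₂(1) = 0, then τ̄₂(z) = (7/144)·(z^{3/2}−1)²/z^{3/2} for all z ∈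 U. -/
/-!
The slit plane is open and star-convex about `1`, so a function on it is determined by its
derivative and its value at `1`. Both claimed solutions are multiples of
`(z^{3/2} - 1)^2 / z^{3/2} = z^{3/2} - 2 + z^{-3/2}`, whose derivative is
`(3/2)(z^3 - 1) / z^{5/2}`; and `τ₁' = 0` with `τ₁(1) = 0` kills the product term in (a).
-/

noncomputable section

open Complex

theorem Complex.isPreconnected_slitPlane : IsPreconnected slitPlane :=
  (starConvex_one_slitPlane.isPathConnected one_mem_slitPlane).isConnected.isPreconnected

theorem Complex.hasDerivAt_sq_cpow_sub_one_div_cpow (a : ℂ) {z : ℂ} (hz : z ∈ slitPlane) :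
    HasDerivAt (fun z : ℂ => (z ^ a - 1) ^ 2 / z ^ a)
      (a * ((z ^ a) ^ 2 - 1) / z ^ (a + 1)) z := by
  have hz0 : z ≠ 0 := slitPlane_ne_zero hz
  have hp : z ^ a ≠ 0 := by simp [cpow_eq_zero_iff, hz0]
  have hd := (hasStrictDerivAt_cpow_const (c := a) hz).hasDerivAt
  have hquot : HasDerivAt (fun z : ℂ => (z ^ a - 1) ^ 2 / z ^ a) _ z :=
    ((hd.sub_const 1).pow 2).div hd hp
  have hpred : z ^ (a - 1) * z = z ^ a := by
    conv_rhs => rw [← sub_add_cancel a 1, cpow_add _ _ hz0, cpow_one]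
  refine hquot.congr_deriv ?_
  simp only [cpow_add _ _ hz0, cpow_one, Pi.pow_apply, ← hpred]
  field_simp
  push_cast
  ring

theorem Complex.eq_mul_sq_cpow_three_halves_sub_one_div_of_deriv_eq (c : ℂ) {f : ℂ → ℂ}
    (hf : ∀ z ∈ slitPlane, DifferentiableAt ℂ f z)
    (hf' : ∀ z ∈ slitPlane, deriv f z = 3 / 2 * c * (z ^ 3 - 1) / z ^ ((5 : ℂ) / 2))
    (h1 : f 1 = 0) {z : ℂ} (hz : z ∈ slitPlane) :
    f z = c * (z ^ ((3 : ℂ) / 2) - 1) ^ 2 / z ^ ((3 : ℂ) / 2) := by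
  have hg : ∀ z ∈ slitPlane,
      HasDerivAt (fun z : ℂ => c * (z ^ ((3 : ℂ) / 2) - 1) ^ 2 / z ^ ((3 : ℂ) / 2))
        (3 / 2 * c * (z ^ 3 - 1) / z ^ ((5 : ℂ) / 2)) z := by
    intro z hz
    have h := (hasDerivAt_sq_cpow_sub_one_div_cpow ((3 : ℂ) / 2) hz).const_mul c
    simp only [← mul_div_assoc] at h
    refine h.congr_deriv ?_
    rw [← cpow_mul_nat]
    norm_num
    ring
  have hdiff : DifferentiableOn ℂ f slitPlane := fun z hz => (hf z hz).differentiableWithinAt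
  exact isOpen_slitPlane.eqOn_of_deriv_eq isPreconnected_slitPlane hdiff
    (fun z hz => (hg z hz).differentiableAt.differentiableWithinAt)
    (fun z hz => by rw [hf' z hz, (hg z hz).deriv]) one_mem_slitPlane (by simp [h1]) hz

/-- **Lemma 4.4.** Determination of the subleading coefficients `τ₁, τ₂`
(part (a)) and `τ̄₂` (part (b)) on the slit plane `U = ℂ ∖ (−∞, 0]`, with all
fractional powers taken as principal branches. -/
theorem tau_coefficients :
    (∀ τ₁ τ₂ : ℂ → ℂ,
      (∀ z ∈ Complex.slitPlane, DifferentiableAt ℂ τ₁ z) →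
      (∀ z ∈ Complex.slitPlane, DifferentiableAt ℂ τ₂ z) →
      (∀ z ∈ Complex.slitPlane, deriv τ₁ z = 0) →
      (∀ z ∈ Complex.slitPlane,
        deriv τ₂ z - deriv τ₁ z * τ₁ z + (5/96) * (z^3 - 1) / z ^ ((5:ℂ)/2) = 0) →
      τ₁ 1 = 0 → τ₂ 1 = 0 →
      ∀ z ∈ Complex.slitPlane,
        τ₁ z = 0 ∧ τ₂ z = -(5/144) * (z ^ ((3:ℂ)/2) - 1)^2 / z ^ ((3:ℂ)/2))
    ∧ (∀ τ₂' : ℂ → ℂ,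
      (∀ z ∈ Complex.slitPlane, DifferentiableAt ℂ τ₂' z) →
      (∀ z ∈ Complex.slitPlane,
        deriv τ₂' z = (7/96) * (z^3 - 1) / z ^ ((5:ℂ)/2)) →
      τ₂' 1 = 0 →
      ∀ z ∈ Complex.slitPlane,
        τ₂' z = (7/144) * (z ^ ((3:ℂ)/2) - 1)^2 / z ^ ((3:ℂ)/2)) := by
  constructor
  · intro τ₁ τ₂ hτ₁ hτ₂ hτ₁' hτ₂' hτ₁_one hτ₂_one z hz
    have hτ₁_const : τ₁ z = τ₁ 1 :=
      isOpen_slitPlane.is_const_of_deriv_eq_zero isPreconnected_slitPlane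
        (fun w hw => (hτ₁ w hw).differentiableWithinAt) hτ₁' hz one_mem_slitPlane
    refine ⟨hτ₁_const.trans hτ₁_one,
      eq_mul_sq_cpow_three_halves_sub_one_div_of_deriv_eq _ hτ₂ (fun w hw => ?_) hτ₂_one hz⟩
    linear_combination hτ₂' w hw + τ₁ w * hτ₁' w hw
  · intro τ hτ hτ' hτ_one z hz
    refine eq_mul_sq_cpow_three_halves_sub_one_div_of_deriv_eq _ hτ (fun w hw => ?_) hτ_one hz
    rw [hτ' w hw]
    ring

end
end

section
/- For even integers N1, N2 ≥ 2 with N = N1 + N2 and ξ = N1/N, define G(N1, N2) = −ln( γ_{N1} γ_{N2} γ_{N+1} / ( γ_{N1+1} γ_{N2+1} γ_N ) ), and let K = (8/(3Γ(1/3)))·√(π/3). Then for every δ ∈ (0, 1/2) there exist C > 0 and N₀ such that for all even N1, N2 ≥ 2 with N ≥ N₀ and δ ≤ ξ ≤ 1−δ, one has | G(N1, N2) − [ (1/6)·ln N + (1/6)·ln(ξ(1−ξ)) − ln K + (13/72)·(1/ξ + 1/(1−ξ) − 1)·N^{−1} ] | ≤ C·N^{−2}. -/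
/-!
The odd/even ratio `γ_{2k+1} / γ_{2k}` equals `(27/16)^k Q_k` with
`Q_k = ∏_{i<k} (i+4/3)(i+5/6) / ((i+3/4)(i+5/4))`, so the powers of `27/16` cancel in
`G(2k₁, 2k₂) = log Q_{k₁} + log Q_{k₂} - log Q_{k₁+k₂}`. By Euler's limit formula for `Γ`,
`log Q_k - (1/6) log k` tends to `log (Γ(3/4) Γ(5/4) / (Γ(4/3) Γ(5/6)))`, which the reflection and
duplication formulas turn into `(1/6) log 2 - log K`. A second-order expansion of the logarithm
bounds the increments of `log Q_k - S(2k)`, where `S(n) = (1/6) log n - log K + 13/(72 n)`, by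
`20/k³`; summing the tail gives `|log Q_k - S(2k)| ≤ 20/k²`. As the bracket in the theorem is
`S(N₁) + S(N₂) - S(N)`, the error is `O((δN)⁻²)`.
-/

noncomputable section

/-- `γ_N`: `A_V(N+1)` for `N` even, `N_8(N+1)` for `N` odd. -/
def gammaN (N : ℕ) : ℝ :=
  if N % 2 = 0 then
    ((2:ℝ)⁻¹) ^ (N/2) * ∏ i ∈ Finset.Icc 1 (N/2),
      ((Nat.factorial (6*i-2) : ℝ) * (Nat.factorial (2*i-1) : ℝ)) /
        ((Nat.factorial (4*i-2) : ℝ) * (Nat.factorial (4*i-1) : ℝ))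
  else
    ∏ i ∈ Finset.range ((N+1)/2),
      (((3*i+1 : ℕ) : ℝ) * (Nat.factorial (6*i) : ℝ) * (Nat.factorial (2*i) : ℝ)) /
        ((Nat.factorial (4*i) : ℝ) * (Nat.factorial (4*i+1) : ℝ))

/-- The supersymmetric-point LBF `G(N1,N2) = −ln(γ_{N1} γ_{N2} γ_{N+1} /
(γ_{N1+1} γ_{N2+1} γ_N))`. -/
def Gsusy (N1 N2 : ℕ) : ℝ :=
  -Real.log (gammaN N1 * gammaN N2 * gammaN (N1+N2+1) /
    (gammaN (N1+1) * gammaN (N2+1) * gammaN (N1+N2)))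

/-- The constant `K = (8/(3Γ(1/3)))·√(π/3)`. -/
def Ksusy : ℝ := 8/(3 * Real.Gamma (1/3)) * Real.sqrt (Real.pi/3)


open Real Filter Topology Finset

theorem abs_log_one_add_sub_le {u : ℝ} (hu₀ : 0 ≤ u) (hu : u ≤ 2/3) :
    |log (1 + u) - (u - u^2/2)| ≤ 3 * u^3 := by
  have h := abs_log_sub_add_sum_range_le (x := -u) (by rw [abs_neg, abs_of_nonneg hu₀]; linarith) 2
  norm_num [sum_range_succ, abs_of_nonneg hu₀] at h
  calc |log (1 + u) - (u - u^2/2)| = |-u + u^2/2 + log (1 + u)| := by ring_nf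
    _ ≤ u^3 / (1 - u) := h
    _ ≤ 3 * u^3 := by
        rw [div_le_iff₀ (by linarith)]
        nlinarith [pow_nonneg hu₀ 3]

theorem abs_sub_le_of_abs_sub_succ_le {e f : ℕ → ℝ} {L : ℝ} {k : ℕ}
    (he : Tendsto e atTop (𝓝 L)) (hf : Tendsto f atTop (𝓝 0))
    (h : ∀ m ≥ k, |e (m + 1) - e m| ≤ f m - f (m + 1)) : |e k - L| ≤ f k := by
  have partial_sums : ∀ m ≥ k, |e m - e k| ≤ f k - f m := by
    intro m hm
    induction m, hm using Nat.le_induction with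
    | base => simp
    | succ m hkm ih =>
      calc |e (m + 1) - e k| ≤ |e (m + 1) - e m| + |e m - e k| := abs_sub_le _ _ _
        _ ≤ f k - f (m + 1) := by linarith [h m hkm]
  have := le_of_tendsto_of_tendsto ((he.sub_const (e k)).abs) (hf.const_sub (f k))
    (eventually_atTop.2 ⟨k, partial_sums⟩)
  rwa [sub_zero, abs_sub_comm] at this

theorem tendsto_sum_log_add_sub_log_add {x y : ℝ} (hx : 0 < x) (hy : 0 < y) :
    Tendsto (fun n : ℕ => ∑ m ∈ range (n + 1), (log (m + x) - log (m + y)) - (x - y) * log n)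
      atTop (𝓝 (log (Gamma y) - log (Gamma x))) := by
  refine ((BohrMollerup.tendsto_log_gamma hy).sub (BohrMollerup.tendsto_log_gamma hx)).congr
    fun n => ?_
  simp only [BohrMollerup.logGammaSeq, sum_sub_distrib, add_comm _ x, add_comm _ y]
  ring

theorem Gamma_three_quarters_mul_Gamma_five_quarters :
    Gamma (3/4) * Gamma (5/4) = π * √2 / 4 := by
  have reflection := Gamma_mul_Gamma_one_sub (1/4)
  rw [show π * (1/4) = π/4 by ring, sin_pi_div_four, show (1:ℝ) - 1/4 = 3/4 by norm_num]
    at reflection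
  rw [show (5:ℝ)/4 = 1/4 + 1 by norm_num, Gamma_add_one (by norm_num)]
  have : √2 * √2 = 2 := mul_self_sqrt zero_le_two
  field_simp at reflection ⊢
  linear_combination (√2/2) * reflection - (Gamma (1/4) * Gamma (3/4) / 2) * this

theorem Gamma_one_third_mul_Gamma_four_thirds_mul_Gamma_five_sixths :
    Gamma (1/3) * (Gamma (4/3) * Gamma (5/6)) = 2 ^ (1/3 : ℝ) * (2 * π * √π / (3 * √3)) := by
  have reflection := Gamma_mul_Gamma_one_sub (1/3)
  rw [show π * (1/3) = π/3 by ring, sin_pi_div_three, show (1:ℝ) - 1/3 = 2/3 by norm_num]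
    at reflection
  have duplication := Gamma_mul_Gamma_add_half (1/3)
  rw [show (1:ℝ)/3 + 1/2 = 5/6 by norm_num, show (2:ℝ) * (1/3) = 2/3 by norm_num,
    show (1:ℝ) - 2/3 = 1/3 by norm_num] at duplication
  rw [show (4:ℝ)/3 = 1/3 + 1 by norm_num, Gamma_add_one (by norm_num)]
  have hsqrt₃ : (0:ℝ) < √3 := by positivity
  field_simp at reflection ⊢
  linear_combination Gamma (1/3) * √3 * duplication + (2:ℝ) ^ (1/3 : ℝ) * √π * reflection

theorem Gamma_mul_Gamma_mul_Ksusy :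
    Gamma (3/4) * Gamma (5/4) * Ksusy = 2 ^ (1/6 : ℝ) * (Gamma (4/3) * Gamma (5/6)) := by
  have hΓ : Gamma (1/3) ≠ 0 := (Gamma_pos_of_pos (by norm_num)).ne'
  have two_pow : (2:ℝ) ^ (1/6 : ℝ) * 2 ^ (1/3 : ℝ) = √2 := by
    rw [← rpow_add two_pos, sqrt_eq_rpow]
    norm_num
  apply mul_left_cancel₀ hΓ
  have hsqrt₃ : (0:ℝ) < √3 := by positivity
  calc Gamma (1/3) * (Gamma (3/4) * Gamma (5/4) * Ksusy)
      = π * √2 / 4 * (8/3 * √π / √3) := by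
        rw [Gamma_three_quarters_mul_Gamma_five_quarters, Ksusy, sqrt_div' _ zero_le_three]
        field_simp
    _ = 2 ^ (1/6 : ℝ) * 2 ^ (1/3 : ℝ) * (2 * π * √π / (3 * √3)) := by
        rw [two_pow]
        field_simp
        ring
    _ = Gamma (1/3) * (2 ^ (1/6 : ℝ) * (Gamma (4/3) * Gamma (5/6))) := by
        rw [mul_left_comm, Gamma_one_third_mul_Gamma_four_thirds_mul_Gamma_five_sixths, mul_assoc]

theorem log_Gamma_quotient_eq :
    log (Gamma (3/4)) - log (Gamma (4/3)) + (log (Gamma (5/4)) - log (Gamma (5/6)))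
      = log 2 / 6 - log Ksusy := by
  have hΓ : ∀ x : ℝ, 0 < x → Gamma x ≠ 0 := fun x hx => (Gamma_pos_of_pos hx).ne'
  have hK : 0 < Ksusy := by
    have := Gamma_pos_of_pos (s := 1/3) (by norm_num)
    unfold Ksusy
    positivity
  have h := congrArg log Gamma_mul_Gamma_mul_Ksusy
  rw [log_mul (mul_ne_zero (hΓ _ (by norm_num)) (hΓ _ (by norm_num))) hK.ne',
    log_mul (hΓ _ (by norm_num)) (hΓ _ (by norm_num)),
    log_mul (by positivity) (mul_ne_zero (hΓ _ (by norm_num)) (hΓ _ (by norm_num))),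
    log_mul (hΓ _ (by norm_num)) (hΓ _ (by norm_num)), log_rpow two_pos] at h
  linarith

def qFactor (x : ℝ) : ℝ := (x + 4/3) * (x + 5/6) / ((x + 3/4) * (x + 5/4))

def qProd (k : ℕ) : ℝ := ∏ i ∈ range k, qFactor i

theorem qFactor_pos {x : ℝ} (hx : 0 ≤ x) : 0 < qFactor x := by
  unfold qFactor
  positivity

theorem qProd_pos (k : ℕ) : 0 < qProd k :=
  prod_pos fun i _ => qFactor_pos i.cast_nonneg

theorem log_qFactor {x : ℝ} (hx : 0 ≤ x) :
    log (qFactor x) = log (x + 4/3) - log (x + 3/4) + (log (x + 5/6) - log (x + 5/4)) := by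
  unfold qFactor
  rw [log_div (by positivity) (by positivity), log_mul (by positivity) (by positivity),
    log_mul (by positivity) (by positivity)]
  ring

theorem abs_log_qFactor_sub_le {x : ℝ} (hx : 2 ≤ x) :
    |log (qFactor x) - log ((x + 1) / x) / 6 + 13 / (144 * (x * (x + 1)))| ≤ 20 / x^3 := by
  have hx₀ : 0 < x := by linarith
  have log_add : ∀ c : ℝ, 0 < c → log (x + c) = log x + log (1 + c / x) := fun c hc => by
    rw [← log_mul hx₀.ne' (by positivity)]
    field_simp
  set R : ℝ → ℝ := fun c => log (1 + c / x) - (c / x - (c / x)^2 / 2) with hR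
  have hR_le : ∀ c : ℝ, 0 < c → c ≤ 4/3 → |R c| ≤ 3 * c^3 * (x^3)⁻¹ := fun c hc hc' => by
    have := abs_log_one_add_sub_le (u := c / x) (by positivity)
      (by rw [div_le_iff₀ hx₀]; linarith)
    exact this.trans_eq (by ring)
  -- The first-order terms cancel; the second-order ones leave `-13/(144 x²)`.
  have key : log (qFactor x) - log ((x + 1) / x) / 6 + 13 / (144 * (x * (x + 1)))
      = R (4/3) - R (3/4) + (R (5/6) - R (5/4)) - R 1 / 6 - 13 / (144 * (x^2 * (x + 1))) := by
    rw [log_qFactor hx₀.le, log_div (by positivity) hx₀.ne', log_add _ (by norm_num),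
      log_add _ (by norm_num), log_add _ (by norm_num), log_add _ (by norm_num),
      log_add _ one_pos]
    simp only [hR]
    field_simp
    ring
  have tail : 13 / (144 * (x^2 * (x + 1))) ≤ 13 / 144 * (x^3)⁻¹ := by
    rw [← div_eq_mul_inv, div_div]
    gcongr
    nlinarith
  have tail_nonneg : 0 ≤ 13 / (144 * (x^2 * (x + 1))) := by positivity
  have hx₃ : 0 < (x^3)⁻¹ := by positivity
  obtain ⟨h₁, h₁'⟩ := abs_le.1 (hR_le (4/3) (by norm_num) (by norm_num))
  obtain ⟨h₂, h₂'⟩ := abs_le.1 (hR_le (3/4) (by norm_num) (by norm_num))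
  obtain ⟨h₃, h₃'⟩ := abs_le.1 (hR_le (5/6) (by norm_num) (by norm_num))
  obtain ⟨h₄, h₄'⟩ := abs_le.1 (hR_le (5/4) (by norm_num) (by norm_num))
  obtain ⟨h₅, h₅'⟩ := abs_le.1 (hR_le 1 (by norm_num) (by norm_num))
  rw [key, abs_le, div_eq_mul_inv]
  constructor <;> linarith

def avFactor (i : ℕ) : ℝ :=
  ((6*i-2).factorial * (2*i-1).factorial : ℝ) / ((4*i-2).factorial * (4*i-1).factorial)

def n8Factor (i : ℕ) : ℝ :=
  ((3*i+1 : ℕ) * (6*i).factorial * (2*i).factorial : ℝ) / ((4*i).factorial * (4*i+1).factorial)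

theorem gammaN_two_mul (k : ℕ) : gammaN (2*k) = 2⁻¹ ^ k * ∏ i ∈ Icc 1 k, avFactor i := by
  rw [gammaN, if_pos (by omega), show 2*k/2 = k by omega]
  rfl

theorem gammaN_two_mul_add_one (k : ℕ) : gammaN (2*k+1) = ∏ i ∈ range (k+1), n8Factor i := by
  rw [gammaN, if_neg (by omega), show (2*k+1+1)/2 = k+1 by omega]
  rfl

theorem avFactor_pos (i : ℕ) : 0 < avFactor i := by
  unfold avFactor
  positivity

theorem n8Factor_succ (k : ℕ) : n8Factor (k+1) = 27/32 * avFactor (k+1) * qFactor k := by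
  have h₆ : (6*(k+1)).factorial = (6*k+6) * (6*k+5) * (6*k+4).factorial := by
    rw [show 6*(k+1) = 6*k+4+1+1 by ring, Nat.factorial_succ, Nat.factorial_succ]
    ring
  have h₂ : (2*(k+1)).factorial = (2*k+2) * (2*k+1).factorial := by
    rw [show 2*(k+1) = 2*k+1+1 by ring, Nat.factorial_succ]
  have h₄ : (4*(k+1)).factorial = (4*k+4) * (4*k+3).factorial := by
    rw [show 4*(k+1) = 4*k+3+1 by ring, Nat.factorial_succ]
  have h₄' : (4*(k+1)+1).factorial = (4*k+5) * (4*k+4) * (4*k+3) * (4*k+2).factorial := by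
    rw [show 4*(k+1)+1 = 4*k+2+1+1+1 by ring, Nat.factorial_succ, Nat.factorial_succ,
      Nat.factorial_succ]
    ring
  rw [n8Factor, avFactor, h₆, h₂, h₄, h₄', show 6*(k+1)-2 = 6*k+4 by omega,
    show 2*(k+1)-1 = 2*k+1 by omega, show 4*(k+1)-2 = 4*k+2 by omega,
    show 4*(k+1)-1 = 4*k+3 by omega, qFactor]
  push_cast
  field_simp
  ring

theorem gammaN_two_mul_add_one_eq (k : ℕ) :
    gammaN (2*k+1) = gammaN (2*k) * (27/16) ^ k * qProd k := by
  induction k with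
  | zero => simp [gammaN, qProd]
  | succ k ih =>
    rw [gammaN_two_mul_add_one, prod_range_succ, ← gammaN_two_mul_add_one, ih, n8Factor_succ,
      gammaN_two_mul, gammaN_two_mul, prod_Icc_succ_top (by omega), qProd, qProd,
      prod_range_succ]
    ring

theorem gammaN_two_mul_pos (k : ℕ) : 0 < gammaN (2*k) := by
  rw [gammaN_two_mul]
  have := prod_pos fun i (_ : i ∈ Icc 1 k) => avFactor_pos i
  positivity

theorem Gsusy_two_mul (k₁ k₂ : ℕ) :
    Gsusy (2*k₁) (2*k₂) = log (qProd k₁) + log (qProd k₂) - log (qProd (k₁+k₂)) := by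
  have := gammaN_two_mul_pos k₁
  have := gammaN_two_mul_pos k₂
  have := gammaN_two_mul_pos (k₁+k₂)
  have := qProd_pos k₁
  have := qProd_pos k₂
  have := qProd_pos (k₁+k₂)
  have ratio : gammaN (2*k₁) * gammaN (2*k₂) * gammaN (2*(k₁+k₂)+1)
      / (gammaN (2*k₁+1) * gammaN (2*k₂+1) * gammaN (2*(k₁+k₂)))
      = qProd (k₁+k₂) / (qProd k₁ * qProd k₂) := by
    rw [gammaN_two_mul_add_one_eq, gammaN_two_mul_add_one_eq, gammaN_two_mul_add_one_eq, pow_add]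
    field_simp
  rw [Gsusy, show 2*k₁+2*k₂ = 2*(k₁+k₂) by ring, ratio, log_div (by positivity) (by positivity),
    log_mul (by positivity) (by positivity)]
  ring

theorem log_qProd (k : ℕ) : log (qProd k) = ∑ i ∈ range k, log (qFactor i) :=
  log_prod fun i _ => (qFactor_pos i.cast_nonneg).ne'

def qAsymptotic (n : ℝ) : ℝ := log n / 6 - log Ksusy + 13 / (72 * n)

theorem tendsto_log_qProd_sub_qAsymptotic :
    Tendsto (fun k : ℕ => log (qProd k) - qAsymptotic (2 * k)) atTop (𝓝 0) := by
  rw [← tendsto_add_atTop_iff_nat 1]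
  -- The `log n` terms of the two Euler limits add up to `(1/6) log n`.
  have euler :=
    (tendsto_sum_log_add_sub_log_add (x := 4/3) (y := 3/4) (by norm_num) (by norm_num)).add
      (tendsto_sum_log_add_sub_log_add (x := 5/6) (y := 5/4) (by norm_num) (by norm_num))
  have small : Tendsto (fun n : ℕ => 13 / (72 * (2 * ((n : ℝ) + 1)))) atTop (𝓝 0) :=
    tendsto_const_nhds.div_atTop <| tendsto_natCast_atTop_atTop.atTop_add tendsto_const_nhds
      |>.const_mul_atTop (by norm_num) |>.const_mul_atTop (by norm_num)
  have h := ((euler.sub (tendsto_log_nat_add_one_sub_log.div_const 6)).sub small).add_const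
    (log Ksusy - log 2 / 6)
  rw [log_Gamma_quotient_eq, zero_div, sub_zero, sub_zero, sub_add_sub_cancel', sub_self] at h
  refine h.congr fun n => ?_
  have hn : (0:ℝ) < n + 1 := by positivity
  simp only [qAsymptotic, log_qProd, log_qFactor (Nat.cast_nonneg _), sum_add_distrib]
  push_cast
  rw [log_mul two_ne_zero hn.ne']
  ring

theorem abs_log_qProd_sub_qAsymptotic_le {k : ℕ} (hk : 2 ≤ k) :
    |log (qProd k) - qAsymptotic (2 * k)| ≤ 20 / (k:ℝ)^2 := by
  have step_le : ∀ m ≥ k,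
      |log (qProd (m + 1)) - qAsymptotic (2 * ↑(m + 1)) - (log (qProd m) - qAsymptotic (2 * m))|
        ≤ 20 / (m:ℝ)^2 - 20 / (↑(m + 1) : ℝ)^2 := by
    intro m hm
    have hm₂ : (2:ℝ) ≤ m := by exact_mod_cast hk.trans hm
    have hm₀ : (0:ℝ) < m := by linarith
    have increment_eq : log (qProd (m + 1)) - qAsymptotic (2 * ↑(m + 1))
          - (log (qProd m) - qAsymptotic (2 * m))
        = log (qFactor m) - log ((m + 1) / m) / 6 + 13 / (144 * (m * (m + 1))) := by
      rw [qProd, prod_range_succ, ← qProd, log_mul (qProd_pos m).ne' (qFactor_pos hm₀.le).ne',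
        log_div (by positivity) hm₀.ne']
      simp only [qAsymptotic]
      push_cast
      rw [log_mul two_ne_zero (by positivity), log_mul two_ne_zero hm₀.ne']
      field_simp
      ring
    have telescoping : 20 / (m:ℝ)^3 ≤ 20 / (m:ℝ)^2 - 20 / ((m:ℝ) + 1)^2 := by
      rw [div_sub_div _ _ (by positivity) (by positivity),
        div_le_div_iff₀ (by positivity) (by positivity)]
      nlinarith [pow_pos hm₀ 3]
    rw [increment_eq, Nat.cast_succ]
    exact (abs_log_qFactor_sub_le hm₂).trans telescoping
  have hf : Tendsto (fun m : ℕ => 20 / (m:ℝ)^2) atTop (𝓝 0) :=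
    tendsto_const_nhds.div_atTop ((tendsto_pow_atTop two_ne_zero).comp tendsto_natCast_atTop_atTop)
  simpa only [sub_zero] using
    abs_sub_le_of_abs_sub_succ_le tendsto_log_qProd_sub_qAsymptotic hf step_le

theorem lbf_expansion_eq_qAsymptotic {a b : ℝ} (ha : 0 < a) (hb : 0 < b) :
    (1/6) * log (a+b) + (1/6) * log ((a/(a+b)) * (1 - a/(a+b))) - log Ksusy
        + (13/72) * (1/(a/(a+b)) + 1/(1 - a/(a+b)) - 1) / (a+b)
      = qAsymptotic a + qAsymptotic b - qAsymptotic (a+b) := by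
  have hab : 0 < a + b := by positivity
  rw [show 1 - a/(a+b) = b/(a+b) by field_simp; ring, div_mul_div_comm,
    log_div (by positivity) (by positivity), log_mul ha.ne' hb.ne', log_mul hab.ne' hab.ne']
  simp only [qAsymptotic]
  field_simp
  ring

theorem abs_Gsusy_two_mul_sub_le {k₁ k₂ : ℕ} (h₁ : 2 ≤ k₁) (h₂ : 2 ≤ k₂) :
    |Gsusy (2*k₁) (2*k₂) - (qAsymptotic (2*k₁) + qAsymptotic (2*k₂) - qAsymptotic (2*k₁ + 2*k₂))|
      ≤ 20 / (k₁:ℝ)^2 + 20 / (k₂:ℝ)^2 + 20 / ((k₁:ℝ) + k₂)^2 := by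
  have e₁ := abs_log_qProd_sub_qAsymptotic_le h₁
  have e₂ := abs_log_qProd_sub_qAsymptotic_le h₂
  have e₃ := abs_log_qProd_sub_qAsymptotic_le (k := k₁ + k₂) (by omega)
  push_cast at e₃
  rw [Gsusy_two_mul, show 2 * (k₁:ℝ) + 2 * k₂ = 2 * (k₁ + k₂) by ring]
  rw [abs_le] at *
  constructor <;> linarith

theorem div_sq_le_of_mul_le {c δ x y : ℝ} (hc : 0 ≤ c) (hδ : 0 < δ) (hy : 0 < y)
    (h : δ * y ≤ x) : c / x^2 ≤ c / δ^2 / y^2 := by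
  rw [div_div, ← mul_pow]
  gcongr

/-- **Equation (84).** Asymptotics of the supersymmetric-point LBF for
`N1, N2` even, with error `O(N^{−2})` uniformly for `δ ≤ ξ ≤ 1−δ`. -/
theorem susy_lbf_asymptotics_even_even :
    ∀ δ ∈ Set.Ioo (0:ℝ) (1/2), ∃ C > (0:ℝ), ∃ N₀ : ℕ,
      ∀ N1 N2 : ℕ, Even N1 → Even N2 → 2 ≤ N1 → 2 ≤ N2 → N₀ ≤ N1 + N2 →
        δ ≤ (N1:ℝ)/((N1:ℝ)+N2) → (N1:ℝ)/((N1:ℝ)+N2) ≤ 1 - δ →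
        |Gsusy N1 N2
          - ((1/6) * Real.log ((N1:ℝ)+N2)
            + (1/6) * Real.log (((N1:ℝ)/((N1:ℝ)+N2)) * (1 - (N1:ℝ)/((N1:ℝ)+N2)))
            - Real.log Ksusy
            + (13/72) * (1/((N1:ℝ)/((N1:ℝ)+N2)) + 1/(1 - (N1:ℝ)/((N1:ℝ)+N2)) - 1)
                / ((N1:ℝ)+N2))|
        ≤ C / ((N1:ℝ)+N2)^2 := by
  rintro δ ⟨hδ₀, hδ⟩
  refine ⟨240 / δ^2, by positivity, ⌈4 / δ⌉₊, ?_⟩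
  rintro _ _ ⟨k₁, rfl⟩ ⟨k₂, rfl⟩ - - hN₀ hξ hξ'
  simp only [← two_mul] at *
  push_cast at *
  have hN_ge : 4 / δ ≤ 2 * (k₁:ℝ) + 2 * k₂ :=
    (Nat.le_ceil _).trans (by exact_mod_cast hN₀)
  have hN_pos : 0 < 2 * (k₁:ℝ) + 2 * k₂ := (by positivity : 0 < 4 / δ).trans_le hN_ge
  have hδN : 4 ≤ δ * (2 * (k₁:ℝ) + 2 * k₂) := by rwa [div_le_iff₀' hδ₀] at hN_ge
  have hδk₁ : δ * ((k₁:ℝ) + k₂) ≤ k₁ := by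
    have := (le_div_iff₀ hN_pos).mp hξ
    linarith
  have hδk₂ : δ * ((k₁:ℝ) + k₂) ≤ k₂ := by
    have := (div_le_iff₀ hN_pos).mp hξ'
    linarith
  have h₁ : 2 ≤ k₁ := by exact_mod_cast (show (2:ℝ) ≤ k₁ by linarith)
  have h₂ : 2 ≤ k₂ := by exact_mod_cast (show (2:ℝ) ≤ k₂ by linarith)
  have hk : (0:ℝ) < k₁ + k₂ := by positivity
  have hk₁₂ : δ * ((k₁:ℝ) + k₂) ≤ k₁ + k₂ := by nlinarith
  rw [lbf_expansion_eq_qAsymptotic (by positivity) (by positivity)]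
  refine (abs_Gsusy_two_mul_sub_le h₁ h₂).trans <| (add_le_add_three
    (div_sq_le_of_mul_le (by norm_num) hδ₀ hk hδk₁) (div_sq_le_of_mul_le (by norm_num) hδ₀ hk hδk₂)
    (div_sq_le_of_mul_le (by norm_num) hδ₀ hk hk₁₂)).trans_eq ?_
  field_simp
  ring

end
end
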